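/- arXiv:2301.13474 — 9 statements merged into one kernel-verified Lean document; each statement's English description precedes it below -/
import Mathlib

section
/- The Diophantine equation y^2 - x*y*z + z^2 = x^3 - 5 has no solution in integers x, y, z. -/
/-!
Reducing modulo 4 and modulo 9 forces `x ≡ 1 (mod 4)` and `x ≡ 0, 3, 6, 8 (mod 9)`, so `x - 2`
has a divisor `m ≡ ±5 (mod 12)`. Modulo `m` the equation becomes `(y - z)² ≡ 3`, whereas
the Jacobi symbol `(3 | m)` is `-1` by quadratic reciprocity.
-/

lemma Int.emod_four_eq_one_of_fruit {x y z : ℤ} (h : y ^ 2 - x * y * z + z ^ 2 = x ^ 3 - 5) :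
    x % 4 = 1 := by
  have key : ∀ a b c : ZMod 4, b ^ 2 - a * b * c + c ^ 2 = a ^ 3 - 5 → a.val = 1 := by decide
  have hx := key x y z (by exact_mod_cast congrArg (Int.cast : ℤ → ZMod 4) h)
  have hval := ZMod.val_intCast (n := 4) x
  omega

lemma Int.emod_nine_of_fruit {x y z : ℤ} (h : y ^ 2 - x * y * z + z ^ 2 = x ^ 3 - 5) :
    x % 9 = 0 ∨ x % 9 = 3 ∨ x % 9 = 6 ∨ x % 9 = 8 := by
  have key : ∀ a b c : ZMod 9, b ^ 2 - a * b * c + c ^ 2 = a ^ 3 - 5 →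
      a.val = 0 ∨ a.val = 3 ∨ a.val = 6 ∨ a.val = 8 := by decide
  have hx := key x y z (by exact_mod_cast congrArg (Int.cast : ℤ → ZMod 9) h)
  have hval := ZMod.val_intCast (n := 9) x
  omega

lemma Int.exists_natCast_dvd_sub_two {x : ℤ} (h4 : x % 4 = 1)
    (h9 : x % 9 = 0 ∨ x % 9 = 3 ∨ x % 9 = 6 ∨ x % 9 = 8) :
    ∃ m : ℕ, (m : ℤ) ∣ x - 2 ∧ (m % 12 = 5 ∨ m % 12 = 7) := by
  by_cases h8 : x % 9 = 8
  -- here `x ≡ 17 (mod 36)`, so `(x - 2) / 3 ≡ 5 (mod 12)`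
  · exact ⟨((x - 2) / 3).natAbs,
      Int.natAbs_dvd.mpr (EuclideanDomain.div_dvd_of_dvd (by omega)), by omega⟩
  · exact ⟨(x - 2).natAbs, Int.natAbs_dvd.mpr dvd_rfl, by omega⟩

lemma isSquare_three_of_fruit_of_dvd_sub_two {x y z : ℤ} {m : ℕ}
    (h : y ^ 2 - x * y * z + z ^ 2 = x ^ 3 - 5) (hm : (m : ℤ) ∣ x - 2) :
    IsSquare (3 : ZMod m) := by
  have hdvd : (m : ℤ) ∣ (y - z) ^ 2 - 3 := by
    obtain ⟨k, hk⟩ := hm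
    exact ⟨k * (x ^ 2 + 2 * x + 4 + y * z),
      by linear_combination h + (x ^ 2 + 2 * x + 4 + y * z) * hk⟩
  have hzero := (ZMod.intCast_zmod_eq_zero_iff_dvd _ m).mpr hdvd
  push_cast at hzero
  exact ⟨y - z, by linear_combination -hzero⟩

lemma jacobiSym_three_eq_neg_one {m : ℕ} (hm : m % 12 = 5 ∨ m % 12 = 7) :
    jacobiSym 3 m = -1 := by
  rw [jacobiSym.mod_right 3 (Nat.odd_iff.mpr (by omega))]
  rcases hm with hm | hm <;> norm_num [hm]

/-- The Diophantine equation `y² - x*y*z + z² = x³ - 5` has no solution in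
integers `x`, `y`, `z`. -/
theorem fruit_diophantine_no_solution :
    ¬ ∃ x y z : ℤ, y ^ 2 - x * y * z + z ^ 2 = x ^ 3 - 5 := by
  rintro ⟨x, y, z, h⟩
  obtain ⟨m, hm, hm12⟩ :=
    Int.exists_natCast_dvd_sub_two (Int.emod_four_eq_one_of_fruit h) (Int.emod_nine_of_fruit h)
  apply ZMod.nonsquare_of_jacobiSym_eq_neg_one (jacobiSym_three_eq_neg_one hm12)
  exact_mod_cast isSquare_three_of_fruit_of_dvd_sub_two h hm
end

section
/- Let a and b be fixed integers with a ≡ 1 (mod 12) and b = 8a - 3. Then the Diophantine equation a*x^3 - y^2 - z^2 + x*y*z - b = 0 has no solution in integers x, y, z. -/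
open jacobiSym

lemma jacobi_key {n : ℕ} (h : n % 12 = 5 ∨ n % 12 = 7) : ¬ IsSquare ((3:ℤ) : ZMod n) := by
  apply ZMod.nonsquare_of_jacobiSym_eq_neg_one
  have hodd : Odd n := by rw [Nat.odd_iff]; omega
  rw [jacobiSym.mod_right 3 hodd]
  norm_num
  rcases h with h | h <;> rw [h] <;> norm_num

lemma mod4_key : ∀ k x y z : ZMod 4,
    (12*k+1)*x^3 - y^2 - z^2 + x*y*z - (8*(12*k+1)-3) = 0 → x = 1 := by decide

lemma mod9_key : ∀ k x y z : ZMod 9,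
    (12*k+1)*x^3 - y^2 - z^2 + x*y*z - (8*(12*k+1)-3) = 0 →
    x = 0 ∨ x = 3 ∨ x = 6 ∨ x = 8 := by decide

lemma odd_dvd_of_dvd_four_mul {m c : ℤ} (hm : m % 2 = 1) (h : m ∣ 4 * c) : m ∣ c := by
  have h2 : IsCoprime (2:ℤ) m := by
    rw [Int.prime_two.coprime_iff_not_dvd]
    omega
  have h4 : IsCoprime m 4 := by
    have := (h2.symm.pow_right (n := 2))
    norm_num at this
    exact this
  exact h4.dvd_of_dvd_mul_left h

/-- For fixed integers `a`, `b` with `a ≡ 1 (mod 12)` and `b = 8a - 3`,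
the Diophantine equation `a*x³ - y² - z² + x*y*z - b = 0` has no integer
solution. -/
theorem no_solution_cubic_fruit (a b : ℤ) (ha : a % 12 = 1) (hb : b = 8 * a - 3) :
    ¬ ∃ x y z : ℤ, a * x ^ 3 - y ^ 2 - z ^ 2 + x * y * z - b = 0 := by
  rintro ⟨x, y, z, h⟩
  obtain ⟨k, hk⟩ : ∃ k, a = 12 * k + 1 := ⟨a / 12, by omega⟩
  subst hb hk
  -- mod 4 information
  have h4 : x % 4 = 1 := by
    have hc := congrArg (Int.cast : ℤ → ZMod 4) h
    push_cast at hc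
    have := mod4_key (k : ZMod 4) (x : ZMod 4) (y : ZMod 4) (z : ZMod 4)
      (by linear_combination hc)
    have h1 : ((x : ℤ) : ZMod 4) = ((1 : ℤ) : ZMod 4) := by push_cast; exact this
    rw [ZMod.intCast_eq_intCast_iff'] at h1
    simpa using h1
  -- mod 9 information
  have h9 : x % 9 = 0 ∨ x % 9 = 3 ∨ x % 9 = 6 ∨ x % 9 = 8 := by
    have hc := congrArg (Int.cast : ℤ → ZMod 9) h
    push_cast at hc
    have := mod9_key (k : ZMod 9) (x : ZMod 9) (y : ZMod 9) (z : ZMod 9)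
      (by linear_combination hc)
    rcases this with h1 | h1 | h1 | h1
    · left
      have h2 : ((x : ℤ) : ZMod 9) = ((0 : ℤ) : ZMod 9) := by push_cast; exact h1
      rw [ZMod.intCast_eq_intCast_iff'] at h2; simpa using h2
    · right; left
      have h2 : ((x : ℤ) : ZMod 9) = ((3 : ℤ) : ZMod 9) := by push_cast; exact h1
      rw [ZMod.intCast_eq_intCast_iff'] at h2; simpa using h2
    · right; right; left
      have h2 : ((x : ℤ) : ZMod 9) = ((6 : ℤ) : ZMod 9) := by push_cast; exact h1
      rw [ZMod.intCast_eq_intCast_iff'] at h2; simpa using h2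
    · right; right; right
      have h2 : ((x : ℤ) : ZMod 9) = ((8 : ℤ) : ZMod 9) := by push_cast; exact h1
      rw [ZMod.intCast_eq_intCast_iff'] at h2; simpa using h2
  set u : ℤ := y - z with hu
  set v : ℤ := y + z with hv
  -- key divisibility
  have hdvd4 : (x - 2) ∣ 4 * (u ^ 2 - 3) :=
    ⟨4 * (12 * k + 1) * (x ^ 2 + 2 * x + 4) + v ^ 2 - u ^ 2, by
      rw [hu, hv]; linear_combination (-4 : ℤ) * h⟩
  have hodd : (x - 2) % 2 = 1 := by omega
  have hdvd : (x - 2) ∣ u ^ 2 - 3 := odd_dvd_of_dvd_four_mul hodd hdvd4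
  rcases h9 with h9 | h9 | h9 | h9
  -- cases with 3 ∣ x : use n = |x-2|
  case _ | _ | _ =>
    set n : ℕ := (x - 2).natAbs with hn
    have hna := Int.natAbs_eq (x - 2)
    have hn12 : n % 12 = 5 ∨ n % 12 = 7 := by
      rcases hna with h1 | h1 <;> omega
    apply jacobi_key hn12
    have hd : ((n : ℤ)) ∣ u ^ 2 - 3 := (Int.natAbs_dvd.mpr hdvd)
    have hz : ((u ^ 2 - 3 : ℤ) : ZMod n) = 0 := (ZMod.intCast_zmod_eq_zero_iff_dvd _ _).mpr hd
    push_cast at hz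
    exact ⟨(u : ZMod n), by linear_combination -hz⟩
  -- case x ≡ 8 mod 9
  · have h3u : (3 : ℤ) ∣ u := by
      have h3d : (3 : ℤ) ∣ u ^ 2 - 3 := dvd_trans ⟨(x - 2) / 3, by omega⟩ hdvd
      have : (3 : ℤ) ∣ u ^ 2 := by omega
      exact Int.prime_three.dvd_of_dvd_pow this
    obtain ⟨w, hw⟩ := h3u
    obtain ⟨t, ht⟩ : ∃ t, x - 2 = 3 * t := ⟨(x - 2) / 3, by omega⟩
    have htd : t ∣ 3 * w ^ 2 - 1 := by
      have : (3 : ℤ) * t ∣ 3 * (3 * w ^ 2 - 1) := by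
        rw [← ht]
        have : u ^ 2 - 3 = 3 * (3 * w ^ 2 - 1) := by rw [hw]; ring
        rwa [this] at hdvd
      exact (mul_dvd_mul_iff_left (by norm_num : (3:ℤ) ≠ 0)).mp this
    set m : ℕ := t.natAbs with hm
    have hta := Int.natAbs_eq t
    have hm12 : m % 12 = 5 ∨ m % 12 = 7 := by
      rcases hta with h1 | h1 <;> omega
    apply jacobi_key hm12
    have hd : ((m : ℤ)) ∣ 3 * w ^ 2 - 1 := (Int.natAbs_dvd.mpr htd)
    have hz : ((3 * w ^ 2 - 1 : ℤ) : ZMod m) = 0 := (ZMod.intCast_zmod_eq_zero_iff_dvd _ _).mpr hd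
    push_cast at hz
    exact ⟨3 * (w : ZMod m), by linear_combination (-3 : ZMod m) * hz⟩
end

section
/- Let d be a positive odd integer divisible by 3, and let a and b be fixed integers with a ≡ 1 (mod 12) and b = 2^d * a - 3. Then the Diophantine equation a*x^d - y^2 - z^2 + x*y*z - b = 0 has no solution in integers x, y, z. -/
/-!
Complete the square: writing `z = 2w` (forced mod 4), a solution gives
`(y - x w)² - 3 = (x - 2) Q` with `Q = (x + 2) w² + a (x^d - 2^d)/(x - 2)`, so `3` is a square
modulo every divisor of `x - 2`. By quadratic reciprocity an odd divisor of `v² - 3` prime to `3`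
is `≡ ±1 (mod 12)`, while reducing mod `12` forces `x ≡ 5` or `9 (mod 12)`. For `x ≡ 9` this
already fails for `x - 2`; for `x ≡ 5` it applies to `m = (x - 2)/3` and gives `m ≡ 1 (mod 3)`,
whereas `3 ∣ d` makes `Q ≡ w² (mod 3)` and then `m Q ≡ -1 (mod 3)` is impossible.
-/

theorem Int.emod_twelve_of_dvd_sq_sub_three {n v : ℤ} (hn : Odd n) (hn3 : ¬ 3 ∣ n)
    (h : n ∣ v ^ 2 - 3) : n % 12 = 1 ∨ n % 12 = 11 := by
  by_contra hne
  have hN : n.natAbs % 12 = 5 ∨ n.natAbs % 12 = 7 := by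
    have := Int.odd_iff.mp hn
    have h12 : n % 12 = 5 ∨ n % 12 = 7 := by omega
    rcases Int.natAbs_eq n with hsign | hsign <;> omega
  have hJ : jacobiSym 3 n.natAbs = -1 := by
    rw [jacobiSym.mod_right 3 (Int.natAbs_odd.mpr hn)]
    rcases hN with hN | hN <;> rw [show (4 * (3 : ℤ).natAbs) = 12 from rfl, hN] <;> norm_num
  apply ZMod.nonsquare_of_jacobiSym_eq_neg_one hJ
  refine ⟨(v : ZMod n.natAbs), ?_⟩
  have hv : ((v ^ 2 - 3 : ℤ) : ZMod n.natAbs) = 0 :=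
    (ZMod.intCast_zmod_eq_zero_iff_dvd _ _).mpr (Int.natAbs_dvd.mpr h)
  push_cast at hv ⊢
  linear_combination -hv

theorem Int.dvd_geom_sum₂_of_modEq {n x y : ℤ} {d : ℕ} (hxy : x ≡ y [ZMOD n])
    (hd : n ∣ d) : n ∣ ∑ i ∈ Finset.range d, x ^ i * y ^ (d - 1 - i) := by
  have hsum : ∑ i ∈ Finset.range d, x ^ i * y ^ (d - 1 - i) ≡ d * y ^ (d - 1) [ZMOD n] := by
    rw [← geom_sum₂_self]
    exact Int.ModEq.sum fun i _ => (hxy.pow i).mul_right _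
  exact Int.modEq_zero_iff_dvd.mp
    (hsum.trans (Int.modEq_zero_iff_dvd.mpr (Dvd.dvd.mul_right hd _)))

theorem pow_odd_eq_pow_three {M : Type*} [Monoid M] {X : M} (h : X ^ 5 = X ^ 3) {d : ℕ}
    (hd : Odd d) (hd3 : 3 ≤ d) : X ^ d = X ^ 3 := by
  obtain ⟨k, rfl⟩ := hd
  obtain ⟨j, rfl⟩ : ∃ j, k = j + 1 := ⟨k - 1, by omega⟩
  induction j with
  | zero => rfl
  | succ j ih =>
    rw [show 2 * (j + 1 + 1) + 1 = 2 * (j + 1) + 1 + 2 by ring, pow_add, ih (by omega),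
      ← pow_add, h]

theorem emod_twelve_of_generalized_fruit_eq_zero {d : ℕ} (hd : Odd d) (hd3 : 3 ≤ d)
    {a x y z : ℤ} (ha : a % 12 = 1)
    (h : a * x ^ d - y ^ 2 - z ^ 2 + x * y * z - (2 ^ d * a - 3) = 0) :
    (x % 12 = 5 ∨ x % 12 = 9) ∧ 2 ∣ z := by
  have hmod : ∀ X Y Z : ZMod 12, X ^ 3 - Y ^ 2 - Z ^ 2 + X * Y * Z - 5 = 0 →
      (X = 5 ∨ X = 9) ∧ 6 * Z = 0 := by
    decide
  have hpow (X : ZMod 12) : X ^ d = X ^ 3 := pow_odd_eq_pow_three (by revert X; decide) hd hd3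
  have ha' : (a : ZMod 12) = 1 := (ZMod.intCast_eq_intCast_iff' a 1 12).mpr ha
  have h12 := congrArg (Int.cast : ℤ → ZMod 12) h
  push_cast at h12
  rw [hpow, hpow, ha'] at h12
  obtain ⟨hx, hz⟩ := hmod x y z (by linear_combination h12)
  have hz' : (12 : ℤ) ∣ 6 * z :=
    (ZMod.intCast_zmod_eq_zero_iff_dvd _ 12).mp (by push_cast; exact hz)
  refine ⟨?_, by omega⟩
  rcases hx with hx | hx
  · left; simpa using (ZMod.intCast_eq_intCast_iff' x 5 12).mp (by exact_mod_cast hx)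
  · right; simpa using (ZMod.intCast_eq_intCast_iff' x 9 12).mp (by exact_mod_cast hx)

theorem sq_sub_three_ne_mul_of_emod_twelve_eq_five {u x Q w : ℤ} (hx : x % 12 = 5)
    (hQ : Q ≡ w ^ 2 [ZMOD 3]) : u ^ 2 - 3 ≠ (x - 2) * Q := by
  intro h
  obtain ⟨m, hm⟩ : ∃ m, x - 2 = 3 * m := ⟨(x - 2) / 3, by omega⟩
  obtain ⟨t, rfl⟩ : 3 ∣ u :=
    Int.prime_three.dvd_of_dvd_pow (n := 2) ⟨m * Q + 1, by linear_combination h + Q * hm⟩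
  have hmQ : 3 * t ^ 2 - 1 = m * Q :=
    mul_left_cancel₀ three_ne_zero (by linear_combination h + Q * hm)
  have hm12 : m % 12 = 1 ∨ m % 12 = 11 := by
    refine Int.emod_twelve_of_dvd_sq_sub_three (v := 3 * t) (Int.odd_iff.mpr (by omega)) ?_
      ⟨3 * Q, by linear_combination 3 * hmQ⟩
    intro h3m
    have : (3 : ℤ) ∣ 3 * t ^ 2 - 1 := hmQ ▸ dvd_mul_of_dvd_left h3m Q
    omega
  have hm3 : (m : ZMod 3) = 1 := (ZMod.intCast_eq_intCast_iff' m 1 3).mpr (by omega)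
  have hQ3 : (Q : ZMod 3) = (w : ZMod 3) ^ 2 := by
    simpa using (ZMod.intCast_eq_intCast_iff _ _ 3).mpr hQ
  have h3 := congrArg (Int.cast : ℤ → ZMod 3) hmQ
  push_cast at h3
  rw [hm3, hQ3, one_mul] at h3
  have hsq : ∀ s c : ZMod 3, 3 * s ^ 2 - 1 ≠ c ^ 2 := by decide
  exact hsq _ _ h3

theorem no_solution_generalized_fruit_general (d : ℕ) (hodd : Odd d)
    (h3 : 3 ∣ d) (a b : ℤ) (ha : a % 12 = 1) (hb : b = 2 ^ d * a - 3) :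
    ¬ ∃ x y z : ℤ, a * x ^ d - y ^ 2 - z ^ 2 + x * y * z - b = 0 := by
  rintro ⟨x, y, z, h⟩
  subst hb
  obtain ⟨hx, w, rfl⟩ :=
    emod_twelve_of_generalized_fruit_eq_zero hodd (Nat.le_of_dvd hodd.pos h3) ha h
  set S := ∑ i ∈ Finset.range d, x ^ i * 2 ^ (d - 1 - i)
  have hsquare : (y - x * w) ^ 2 - 3 = (x - 2) * ((x + 2) * w ^ 2 + a * S) := by
    linear_combination -h - a * geom_sum₂_mul x 2 d
  rcases hx with hx | hx
  · obtain ⟨k, hk⟩ : 3 ∣ S :=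
      Int.dvd_geom_sum₂_of_modEq (by unfold Int.ModEq; omega) (by exact_mod_cast h3)
    obtain ⟨j, rfl⟩ : ∃ j, x = 3 * j + 2 := ⟨x / 3, by omega⟩
    refine sq_sub_three_ne_mul_of_emod_twelve_eq_five (w := w) hx ?_ hsquare
    exact Int.modEq_iff_dvd.mpr ⟨-((j + 1) * w ^ 2 + a * k), by linear_combination -a * hk⟩
  · have := Int.emod_twelve_of_dvd_sq_sub_three (n := x - 2) (v := y - x * w)
      (Int.odd_iff.mpr (by omega)) (by omega) ⟨_, hsquare⟩
    omega

/-- Let `d` be a positive odd integer divisible by `3`, and `a`, `b` integers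
with `a ≡ 1 (mod 12)` and `b = 2^d * a - 3`. Then
`a*x^d - y² - z² + x*y*z - b = 0` has no integer solution. -/
theorem no_solution_generalized_fruit (d : ℕ) (hd : 0 < d) (hodd : Odd d)
    (h3 : 3 ∣ d) (a b : ℤ) (ha : a % 12 = 1) (hb : b = 2 ^ d * a - 3) :
    ¬ ∃ x y z : ℤ, a * x ^ d - y ^ 2 - z ^ 2 + x * y * z - b = 0 :=
  no_solution_generalized_fruit_general d hodd h3 a b ha hb
end

section
/- Let d be a positive odd integer divisible by 3, let r be a positive odd integer, and let a and b be fixed integers with a ≡ 1 (mod 12) and b = 2^d * a - 3^r. Then the equation a*x^d - y^2 - z^2 + x*y*z - b = 0 has no integer solution (x, y, z) with x even. -/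
/-- Let `d` be a positive odd integer divisible by `3`, `r` a positive odd
integer, and `a`, `b` integers with `a ≡ 1 (mod 12)` and `b = 2^d * a - 3^r`.
Then `a*x^d - y² - z² + x*y*z - b = 0` has no integer solution with `x` even. -/
theorem no_solution_x_even (d : ℕ) (hd : 0 < d) (hodd : Odd d) (h3 : 3 ∣ d)
    (r : ℕ) (hr : 0 < r) (hrodd : Odd r)
    (a b : ℤ) (ha : a % 12 = 1) (hb : b = 2 ^ d * a - 3 ^ r) :
    ¬ ∃ x y z : ℤ, Even x ∧ a * x ^ d - y ^ 2 - z ^ 2 + x * y * z - b = 0 := by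
  rintro ⟨x, y, z, ⟨c, hc⟩, heq⟩
  have h2 : 2 ≤ d := le_trans (by norm_num) (Nat.le_of_dvd hd h3)
  obtain ⟨k, hk⟩ := Nat.exists_eq_add_of_le h2
  subst hb hc hk
  have h4 : ((a * (c + c) ^ (2 + k) - y ^ 2 - z ^ 2 + (c + c) * y * z -
      (2 ^ (2 + k) * a - 3 ^ r) : ℤ) : ZMod 4) = 0 := by
    rw [heq]; simp
  push_cast at h4
  have h3r : (3 : ZMod 4) ^ r = 3 := by
    have h31 : (3 : ZMod 4) = -1 := by decide
    rw [h31, hrodd.neg_one_pow]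
  have hx2 : ((c : ZMod 4) + c) ^ (2 + k) = 0 := by
    rw [pow_add]
    have : ((c : ZMod 4) + c) ^ 2 = 4 * c ^ 2 := by ring
    rw [this]
    have h40 : (4 : ZMod 4) = 0 := by decide
    rw [h40, zero_mul, zero_mul]
  have h2d : (2 : ZMod 4) ^ (2 + k) = 0 := by
    rw [pow_add]
    have : (2 : ZMod 4) ^ 2 = 0 := by decide
    rw [this, zero_mul]
  rw [hx2, h3r, h2d] at h4
  revert h4
  generalize (a : ZMod 4) = A
  generalize (c : ZMod 4) = C
  generalize (y : ZMod 4) = Y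
  generalize (z : ZMod 4) = Z
  revert A C Y Z
  decide
end

section
/- Let d be a positive odd integer divisible by 3, let r be a positive odd integer, and let a and b be fixed integers with a ≡ 1 (mod 12) and b = 2^d * a - 3^r. Then the equation a*x^d - y^2 - z^2 + x*y*z - b = 0 has no integer solution (x, y, z) with x ≡ 1 (mod 12) or x ≡ 9 (mod 12). -/
open NumberTheorySymbols

/-!
For `x ≡ 1 (mod 12)` reduce modulo `3`: the equation becomes `y² - yz + z² ≡ 2`, but
`y² - yz + z² ≡ (y + z)²` is `0` or `1` modulo `3`.

For `x ≡ 9 (mod 12)` reduce modulo `x - 2`: since `x ≡ 2`, the equation becomes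
`(y - z)² ≡ 3^r (mod x - 2)`. Now `n = |x - 2|` is `5` or `7` modulo `12`, so the Jacobi symbol
`J(3 | n)` is `-1`, hence `J(3^r | n) = -1` for odd `r` and `3^r` is not a square modulo `n`.
-/
theorem jacobiSym_three_eq_neg_one_s7 {n : ℕ} (hn : n % 12 = 5 ∨ n % 12 = 7) : J(3 | n) = -1 := by
  rw [jacobiSym.mod_right 3 (Nat.odd_iff.mpr (by omega))]
  rcases hn with h | h <;> simp only [Int.reduceAbs, h] <;> norm_num

theorem not_dvd_sq_sub_three_pow {n : ℕ} (hn : n % 12 = 5 ∨ n % 12 = 7) {r : ℕ} (hr : Odd r)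
    (m : ℤ) : ¬ (n : ℤ) ∣ m ^ 2 - 3 ^ r := by
  intro hdvd
  refine ZMod.nonsquare_of_jacobiSym_eq_neg_one (a := 3 ^ r) ?_ ⟨(m : ZMod n), ?_⟩
  · rw [jacobiSym.pow_left, jacobiSym_three_eq_neg_one_s7 hn, hr.neg_one_pow]
  · have := (ZMod.intCast_zmod_eq_zero_iff_dvd _ n).mpr hdvd
    push_cast at this ⊢
    linear_combination -this

theorem sub_two_dvd_sq_sub {d : ℕ} {a c x y z : ℤ}
    (h : a * x ^ d - y ^ 2 - z ^ 2 + x * y * z - (2 ^ d * a - c) = 0) :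
    x - 2 ∣ (y - z) ^ 2 - c := by
  obtain ⟨q, hq⟩ := sub_dvd_pow_sub_pow x 2 d
  exact ⟨a * q + y * z, by linear_combination a * hq - h⟩

theorem sq_sub_mul_add_sq_ne_two (u v : ZMod 3) : u ^ 2 - u * v + v ^ 2 ≠ 2 := by
  revert u v; decide

theorem equation_ne_zero_of_mod_three {d r : ℕ} (hd : Odd d) (hr : Odd r) {a x : ℤ}
    (ha : (a : ZMod 3) = 1) (hx : (x : ZMod 3) = 1) (y z : ℤ) :
    a * x ^ d - y ^ 2 - z ^ 2 + x * y * z - (2 ^ d * a - 3 ^ r) ≠ 0 := by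
  intro h
  apply sq_sub_mul_add_sq_ne_two y z
  have h3 : ((a * x ^ d - y ^ 2 - z ^ 2 + x * y * z - (2 ^ d * a - 3 ^ r) : ℤ) : ZMod 3) = 0 := by
    rw [h, Int.cast_zero]
  push_cast [ha, hx] at h3
  rw [show (2 : ZMod 3) = -1 from rfl, show (3 : ZMod 3) = 0 from rfl, hd.neg_one_pow,
    zero_pow hr.pos.ne'] at h3
  linear_combination -h3

theorem no_solution_x_one_or_nine_general (d : ℕ) (hodd : Odd d)
    (r : ℕ) (hrodd : Odd r)
    (a b : ℤ) (ha : a % 12 = 1) (hb : b = 2 ^ d * a - 3 ^ r) :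
    ¬ ∃ x y z : ℤ, (x % 12 = 1 ∨ x % 12 = 9) ∧
      a * x ^ d - y ^ 2 - z ^ 2 + x * y * z - b = 0 := by
  rintro ⟨x, y, z, hx, h⟩
  subst hb
  rcases hx with hx | hx
  · have mod_three {k : ℤ} (hk : k % 12 = 1) : (k : ZMod 3) = 1 := by
      rw [← ZMod.intCast_mod, Nat.cast_ofNat, show k % 3 = 1 by omega, Int.cast_one]
    exact equation_ne_zero_of_mod_three hodd hrodd (mod_three ha) (mod_three hx) y z h
  · exact not_dvd_sq_sub_three_pow (n := (x - 2).natAbs) (by omega) hrodd (y - z)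
      (Int.natAbs_dvd.mpr (sub_two_dvd_sq_sub h))

/-- Let `d` be a positive odd integer divisible by `3`, `r` a positive odd
integer, and `a`, `b` integers with `a ≡ 1 (mod 12)` and `b = 2^d * a - 3^r`.
Then `a*x^d - y² - z² + x*y*z - b = 0` has no integer solution with
`x ≡ 1 (mod 12)` or `x ≡ 9 (mod 12)`. -/
theorem no_solution_x_one_or_nine (d : ℕ) (hd : 0 < d) (hodd : Odd d) (h3 : 3 ∣ d)
    (r : ℕ) (hr : 0 < r) (hrodd : Odd r)
    (a b : ℤ) (ha : a % 12 = 1) (hb : b = 2 ^ d * a - 3 ^ r) :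
    ¬ ∃ x y z : ℤ, (x % 12 = 1 ∨ x % 12 = 9) ∧
      a * x ^ d - y ^ 2 - z ^ 2 + x * y * z - b = 0 :=
  no_solution_x_one_or_nine_general d hodd r hrodd a b ha hb
end

section
/- Let d be a positive odd integer divisible by 3, and let a and b be fixed integers with a ≡ 1 (mod 12) and b = 2^d * a - 3. If integers x, y, z satisfy a*x^d - y^2 - z^2 + x*y*z - b = 0 with x odd, then y and z are both even and x ≡ 1 (mod 4). -/
lemma zmod4_key (X Y Z : ZMod 4) (hX : X = 1 ∨ X = 3)
    (heq : X - Y ^ 2 - Z ^ 2 + X * Y * Z - 1 = 0) :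
    (Y = 0 ∨ Y = 2) ∧ (Z = 0 ∨ Z = 2) ∧ X = 1 := by
  revert hX heq; revert X Y Z; decide

/-- Let `d` be a positive odd integer divisible by `3`, and `a`, `b` integers
with `a ≡ 1 (mod 12)` and `b = 2^d * a - 3`. If integers `x`, `y`, `z` satisfy
`a*x^d - y² - z² + x*y*z - b = 0` with `x` odd, then `y` and `z` are both even
and `x ≡ 1 (mod 4)`. -/
theorem odd_x_solution_properties (d : ℕ) (hd : 0 < d) (hodd : Odd d)
    (h3 : 3 ∣ d) (a b : ℤ) (ha : a % 12 = 1) (hb : b = 2 ^ d * a - 3)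
    (x y z : ℤ) (hx : Odd x)
    (h : a * x ^ d - y ^ 2 - z ^ 2 + x * y * z - b = 0) :
    Even y ∧ Even z ∧ x % 4 = 1 := by
  -- cast equation to ZMod 4
  have h4 : ((a * x ^ d - y ^ 2 - z ^ 2 + x * y * z - b : ℤ) : ZMod 4) = 0 := by
    rw [h]; simp
  have hA : ((a : ℤ) : ZMod 4) = 1 := by
    have : (4 : ℤ) ∣ a - 1 := by omega
    have := (ZMod.intCast_zmod_eq_zero_iff_dvd (a - 1) 4).2 this
    push_cast at this
    linear_combination this
  obtain ⟨m, hm⟩ := hodd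
  have hd2 : 2 ≤ d := by omega
  have h2d : (2 : ZMod 4) ^ d = 0 := by
    obtain ⟨k, hk⟩ : ∃ k, d = 2 + k := ⟨d - 2, by omega⟩
    rw [hk, pow_add]
    have h4 : (2 : ZMod 4) ^ 2 = 0 := by decide
    rw [h4, zero_mul]
  have hX : ((x : ℤ) : ZMod 4) = 1 ∨ ((x : ℤ) : ZMod 4) = 3 := by
    obtain ⟨k, hk⟩ := hx
    rcases Int.even_or_odd k with ⟨j, hj⟩ | ⟨j, hj⟩
    · left
      have : (4 : ℤ) ∣ x - 1 := by omega
      have := (ZMod.intCast_zmod_eq_zero_iff_dvd (x - 1) 4).2 this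
      push_cast at this
      linear_combination this
    · right
      have : (4 : ℤ) ∣ x - 3 := by omega
      have := (ZMod.intCast_zmod_eq_zero_iff_dvd (x - 3) 4).2 this
      push_cast at this
      linear_combination this
  have hx2 : ((x : ℤ) : ZMod 4) ^ 2 = 1 := by
    rcases hX with h' | h' <;> rw [h'] <;> decide
  have hxd : ((x : ℤ) : ZMod 4) ^ d = ((x : ℤ) : ZMod 4) := by
    rw [hm, pow_add, pow_mul, hx2, one_pow, one_mul, pow_one]
  have heq : ((x : ℤ) : ZMod 4) - ((y : ℤ) : ZMod 4) ^ 2 - ((z : ℤ) : ZMod 4) ^ 2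
      + ((x : ℤ) : ZMod 4) * ((y : ℤ) : ZMod 4) * ((z : ℤ) : ZMod 4) - 1 = 0 := by
    rw [hb] at h4
    push_cast at h4
    rw [hxd, hA, h2d] at h4
    have h40 : (4 : ZMod 4) = 0 := by decide
    linear_combination h4 - h40
  obtain ⟨hY, hZ, hX1⟩ := zmod4_key _ _ _ hX heq
  have evY : Even y := by
    rcases hY with h' | h'
    · have : (4 : ℤ) ∣ y := (ZMod.intCast_zmod_eq_zero_iff_dvd y 4).1 h'
      obtain ⟨k, hk⟩ := this; exact ⟨2 * k, by omega⟩
    · have : ((y - 2 : ℤ) : ZMod 4) = 0 := by push_cast; rw [h']; ring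
      have : (4 : ℤ) ∣ y - 2 := (ZMod.intCast_zmod_eq_zero_iff_dvd (y - 2) 4).1 this
      obtain ⟨k, hk⟩ := this; exact ⟨2 * k + 1, by omega⟩
  have evZ : Even z := by
    rcases hZ with h' | h'
    · have : (4 : ℤ) ∣ z := (ZMod.intCast_zmod_eq_zero_iff_dvd z 4).1 h'
      obtain ⟨k, hk⟩ := this; exact ⟨2 * k, by omega⟩
    · have : ((z - 2 : ℤ) : ZMod 4) = 0 := by push_cast; rw [h']; ring
      have : (4 : ℤ) ∣ z - 2 := (ZMod.intCast_zmod_eq_zero_iff_dvd (z - 2) 4).1 this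
      obtain ⟨k, hk⟩ := this; exact ⟨2 * k + 1, by omega⟩
  refine ⟨evY, evZ, ?_⟩
  have : ((x - 1 : ℤ) : ZMod 4) = 0 := by push_cast; rw [hX1]; ring
  have : (4 : ℤ) ∣ x - 1 := (ZMod.intCast_zmod_eq_zero_iff_dvd (x - 1) 4).1 this
  omega
end

section
/- Let d be a positive odd integer divisible by 3, and let a and b be fixed integers with a ≡ 1 (mod 12) and b = 2^d * a - 3. If α is an integer with α ≡ 1 (mod 12), then there are no integers Y, Z satisfying Y^2 - (α^2 - 4)*Z^2 = a*α^d - b. -/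
/-- Let `d` be a positive odd integer divisible by `3`, and `a`, `b` integers
with `a ≡ 1 (mod 12)` and `b = 2^d * a - 3`. If `α ≡ 1 (mod 12)`, then there
are no integers `Y`, `Z` with `Y² - (α² - 4)*Z² = a*α^d - b`. -/
theorem no_solution_alpha_one_mod_twelve (d : ℕ) (hd : 0 < d) (hodd : Odd d)
    (h3 : 3 ∣ d) (a b : ℤ) (ha : a % 12 = 1) (hb : b = 2 ^ d * a - 3)
    (α : ℤ) (hα : α % 12 = 1) :
    ¬ ∃ Y Z : ℤ, Y ^ 2 - (α ^ 2 - 4) * Z ^ 2 = a * α ^ d - b := by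
  rintro ⟨Y, Z, h⟩
  have ha3 : (a : ZMod 3) = 1 := by
    have h' : ((a - 1 : ℤ) : ZMod 3) = 0 := (ZMod.intCast_zmod_eq_zero_iff_dvd _ 3).2 (by omega)
    push_cast at h'
    linear_combination h'
  have hα3 : (α : ZMod 3) = 1 := by
    have h' : ((α - 1 : ℤ) : ZMod 3) = 0 := (ZMod.intCast_zmod_eq_zero_iff_dvd _ 3).2 (by omega)
    push_cast at h'
    linear_combination h'
  subst hb
  have h2 : ((2 : ZMod 3)) ^ d = -1 := by
    rw [show (2 : ZMod 3) = -1 by decide, hodd.neg_one_pow]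
  have key := congrArg (Int.cast : ℤ → ZMod 3) h
  push_cast at key
  rw [hα3, ha3, h2] at key
  have hY : ∀ y : ZMod 3, y ^ 2 ≠ 2 := by decide
  have h0 : (3 : ZMod 3) = 0 := by decide
  exact hY (Y : ZMod 3) (by linear_combination key + (1 - (Z : ZMod 3) ^ 2) * h0)
end

section
/- Let d be a positive odd integer divisible by 3, and let a and b be fixed integers with a ≡ 1 (mod 12) and b = 2^d * a - 3. If α is an integer with α ≡ 9 (mod 12), then there are no integers Y, Z satisfying Y^2 - (α^2 - 4)*Z^2 = a*α^d - b. -/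
/-- Let `d` be a positive odd integer divisible by `3`, and `a`, `b` integers
with `a ≡ 1 (mod 12)` and `b = 2^d * a - 3`. If `α ≡ 9 (mod 12)`, then there
are no integers `Y`, `Z` with `Y² - (α² - 4)*Z² = a*α^d - b`. -/
theorem no_solution_alpha_nine_mod_twelve (d : ℕ) (hd : 0 < d) (hodd : Odd d)
    (h3 : 3 ∣ d) (a b : ℤ) (ha : a % 12 = 1) (hb : b = 2 ^ d * a - 3)
    (α : ℤ) (hα : α % 12 = 9) :
    ¬ ∃ Y Z : ℤ, Y ^ 2 - (α ^ 2 - 4) * Z ^ 2 = a * α ^ d - b := by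
  rintro ⟨Y, Z, hYZ⟩
  set m : ℕ := (α - 2).natAbs with hm
  -- (α - 2) divides Y^2 - 3
  have hdvd : (α - 2) ∣ Y ^ 2 - 3 := by
    have h1 : (α - 2) ∣ α ^ 2 - 4 := ⟨α + 2, by ring⟩
    have h2 : (α - 2) ∣ α ^ d - 2 ^ d := by
      simpa using sub_dvd_pow_sub_pow α 2 d
    have : Y ^ 2 - 3 = (α ^ 2 - 4) * Z ^ 2 + a * (α ^ d - 2 ^ d) := by
      rw [hb] at hYZ; linarith [hYZ]
    rw [this]
    exact dvd_add (h1.mul_right _) (h2.mul_left _)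
  have hmdvd : (m : ℤ) ∣ Y ^ 2 - 3 := by
    rw [hm, Int.natAbs_dvd]; exact hdvd
  -- so 3 is a square mod m
  have hsq : IsSquare ((3 : ℤ) : ZMod m) := by
    refine ⟨(Y : ZMod m), ?_⟩
    have : ((Y ^ 2 - 3 : ℤ) : ZMod m) = 0 :=
      (ZMod.intCast_zmod_eq_zero_iff_dvd _ _).mpr hmdvd
    push_cast at this
    linear_combination -this
  -- m % 12 = 7 or 5
  have hmod : m % 12 = 7 ∨ m % 12 = 5 := by omega
  have hoddm : Odd m := by rw [Nat.odd_iff]; omega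
  have hJ : jacobiSym 3 m = -1 := by
    rw [jacobiSym.mod_right 3 hoddm]
    rcases hmod with h | h <;> norm_num [h] <;> decide
  exact ZMod.nonsquare_of_jacobiSym_eq_neg_one hJ hsq
end

section
/- Let d be a positive odd integer divisible by 3, and let a and b be fixed integers with a ≡ 1 (mod 12) and b = 2^d * a - 3. If α is an integer with α ≡ 5 (mod 12) and there exist integers Y, Z satisfying Y^2 - (α^2 - 4)*Z^2 = a*α^d - b, then 3 divides Y and α ≡ 17 (mod 36). -/
/-- Let `d` be a positive odd integer divisible by `3`, and `a`, `b` integers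
with `a ≡ 1 (mod 12)` and `b = 2^d * a - 3`. If `α ≡ 5 (mod 12)` and there are
integers `Y`, `Z` with `Y² - (α² - 4)*Z² = a*α^d - b`, then `3 ∣ Y` and
`α ≡ 17 (mod 36)`. -/
theorem alpha_five_mod_twelve_properties (d : ℕ) (hd : 0 < d) (hodd : Odd d)
    (h3 : 3 ∣ d) (a b : ℤ) (ha : a % 12 = 1) (hb : b = 2 ^ d * a - 3)
    (α : ℤ) (hα : α % 12 = 5)
    (Y Z : ℤ) (h : Y ^ 2 - (α ^ 2 - 4) * Z ^ 2 = a * α ^ d - b) :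
    3 ∣ Y ∧ α % 36 = 17 := by
  obtain ⟨m, hm⟩ := h3
  have hmodd : Odd m := by
    rcases Nat.even_or_odd m with he | ho
    · exact absurd hodd (by simp [hm, Nat.even_mul, he])
    · exact ho
  -- 9 ∣ α^3 + 1 since α ≡ 2 (mod 3)
  have h3a : (3:ℤ) ∣ α - 2 := by omega
  have h9 : (9:ℤ) ∣ α ^ 3 + 1 := by
    obtain ⟨t, ht⟩ := h3a
    have hαt : α = 3 * t + 2 := by linarith
    exact ⟨3 * t ^ 3 + 6 * t ^ 2 + 4 * t + 1, by rw [hαt]; ring⟩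
  have hαd : (9:ℤ) ∣ α ^ d + 1 := by
    have hdvd : α ^ 3 + 1 ∣ α ^ d + 1 := by
      have := Odd.add_dvd_pow_add_pow (α ^ 3) 1 hmodd
      simpa [hm, pow_mul] using this
    exact h9.trans hdvd
  have h2d : (9:ℤ) ∣ 2 ^ d + 1 := by
    have hdvd : (8:ℤ) + 1 ∣ 8 ^ m + 1 := by
      simpa using Odd.add_dvd_pow_add_pow (8:ℤ) 1 hmodd
    have h8 : (2:ℤ) ^ d = 8 ^ m := by
      rw [hm, pow_mul]; norm_num
    rw [h8]
    simpa using hdvd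
  -- RHS ≡ 3 (mod 9)
  have hr : (9:ℤ) ∣ (a * α ^ d - b) - 3 := by
    obtain ⟨u, hu⟩ := hαd
    obtain ⟨v, hv⟩ := h2d
    exact ⟨a * u - a * v, by rw [hb]; linear_combination a * hu - a * hv⟩
  -- 3 ∣ Y
  have hα4 : (3:ℤ) ∣ α ^ 2 - 4 := by
    obtain ⟨t, ht⟩ := h3a
    exact ⟨t * (α + 2), by linear_combination (α + 2) * ht⟩
  have hY2 : (3:ℤ) ∣ Y ^ 2 := by
    obtain ⟨u, hu⟩ := hα4
    obtain ⟨v, hv⟩ := hr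
    exact ⟨u * Z ^ 2 + 3 * v + 1, by linear_combination h + Z ^ 2 * hu + hv⟩
  have hY : (3:ℤ) ∣ Y := Int.Prime.dvd_pow' (by norm_num) hY2
  refine ⟨hY, ?_⟩
  -- 9 ∣ (α²-4)Z² + 3
  have hY9 : (9:ℤ) ∣ Y ^ 2 := by
    obtain ⟨y, hy⟩ := hY
    exact ⟨y ^ 2, by rw [hy]; ring⟩
  have h93 : (9:ℤ) ∣ (α ^ 2 - 4) * Z ^ 2 + 3 := by
    obtain ⟨w, hw⟩ := hY9
    obtain ⟨v, hv⟩ := hr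
    exact ⟨w - v, by linear_combination hw - hv - h⟩
  have hcase : α % 9 = 2 ∨ α % 9 = 5 ∨ α % 9 = 8 := by omega
  rcases hcase with hc | hc | hc
  · -- α ≡ 2 (mod 9): then 9 ∣ α² - 4, contradiction
    exfalso
    have h9a : (9:ℤ) ∣ α - 2 := by omega
    obtain ⟨t, ht⟩ := h9a
    have : (9:ℤ) ∣ 3 := by
      obtain ⟨v, hv⟩ := h93
      exact ⟨v - t * (α + 2) * Z ^ 2, by linear_combination hv - Z ^ 2 * (α + 2) * ht⟩
    norm_num at this
  · -- α ≡ 5 (mod 9): then α² - 4 ≡ 3 (mod 9), forcing Z² ≡ 2 (mod 3)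
    exfalso
    have h9a : (9:ℤ) ∣ α - 5 := by omega
    obtain ⟨t, ht⟩ := h9a
    have h39 : (9:ℤ) ∣ 3 * (Z ^ 2 + 1) := by
      obtain ⟨v, hv⟩ := h93
      exact ⟨v - t * (α + 5) * Z ^ 2 - 2 * Z ^ 2, by
        linear_combination hv - Z ^ 2 * (α + 5) * ht⟩
    have hZ : (3:ℤ) ∣ Z ^ 2 + 1 := by
      obtain ⟨w, hw⟩ := h39
      exact ⟨w, by linarith⟩
    obtain ⟨w, hw⟩ := hZ
    obtain ⟨q, hq⟩ : ∃ q, Z = 3 * q + Z % 3 := ⟨Z / 3, by omega⟩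
    have key : (3:ℤ) ∣ (Z % 3) ^ 2 + 1 :=
      ⟨w - 3 * q ^ 2 - 2 * q * (Z % 3), by
        linear_combination hw - (Z + 3 * q + Z % 3) * hq⟩
    have hz3 : Z % 3 = 0 ∨ Z % 3 = 1 ∨ Z % 3 = 2 := by omega
    rcases hz3 with hz | hz | hz <;> rw [hz] at key <;> norm_num at key
  · omega
end
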